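/- arXiv:1508.03033 — 6 statements merged into one kernel-verified Lean document; each statement's English description precedes it below -/
import Mathlib

section
/- Let k be a commutative ring and let ∘ : U × V → W be a k-bilinear map between k-modules that is fully nondegenerate (i.e., the left radical {u ∈ U : u∘V = 0}, the right radical {v ∈ V : U∘v = 0}, and the coradical W/⟨U∘V⟩ are all trivial). Then the centroid C(∘), consisting of triples (σ_U, σ_V, σ_W) of endomorphisms satisfying (uσ_U)∘v = (u∘v)σ_W = u∘(vσ_V) for all u, v, is a commutative ring under composition. -/
/-- For a fully nondegenerate bilinear map `f : U × V → W` over a commutative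
ring `k`, the centroid (triples of endomorphisms `(σU, σV, σW)` with
`f (σU u) v = σW (f u v) = f u (σV v)`) is commutative under composition. -/
theorem centroid_commutative (k U V W : Type*) [CommRing k]
    [AddCommGroup U] [AddCommGroup V] [AddCommGroup W]
    [Module k U] [Module k V] [Module k W]
    (f : U →ₗ[k] V →ₗ[k] W)
    (hleft : ∀ u : U, (∀ v : V, f u v = 0) → u = 0)
    (hright : ∀ v : V, (∀ u : U, f u v = 0) → v = 0)
    (hcorad : Submodule.span k {w : W | ∃ u v, f u v = w} = ⊤)
    (σU τU : Module.End k U) (σV τV : Module.End k V) (σW τW : Module.End k W)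
    (hσ : ∀ u v, f (σU u) v = σW (f u v) ∧ σW (f u v) = f u (σV v))
    (hτ : ∀ u v, f (τU u) v = τW (f u v) ∧ τW (f u v) = f u (τV v)) :
    σU ∘ₗ τU = τU ∘ₗ σU ∧ σV ∘ₗ τV = τV ∘ₗ σV ∧ σW ∘ₗ τW = τW ∘ₗ σW := by
  -- key computation on images
  have key : ∀ u v, σW (τW (f u v)) = τW (σW (f u v)) := by
    intro u v
    calc σW (τW (f u v)) = σW (f (τU u) v) := by rw [(hτ u v).1]
      _ = f (τU u) (σV v) := (hσ (τU u) v).2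
      _ = τW (f u (σV v)) := (hτ u (σV v)).1
      _ = τW (f (σU u) v) := by rw [← (hσ u v).2, ← (hσ u v).1]
      _ = f (τU (σU u)) v := ((hτ (σU u) v).1).symm
      _ = τW (σW (f u v)) := by rw [(hτ (σU u) v).1, (hσ u v).1]
  have keyW : ∀ w : W, σW (τW w) = τW (σW w) := by
    intro w
    have hw : w ∈ Submodule.span k {w : W | ∃ u v, f u v = w} := by
      rw [hcorad]; trivial
    induction hw using Submodule.span_induction with
    | mem w hw => obtain ⟨u, v, rfl⟩ := hw; exact key u v
    | zero => simp only [map_zero]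
    | add x y _ _ hx hy => simp only [map_add, hx, hy]
    | smul c x _ hx => simp only [map_smul, hx]
  have hW : σW ∘ₗ τW = τW ∘ₗ σW := by
    ext w; exact keyW w
  have hU : σU ∘ₗ τU = τU ∘ₗ σU := by
    ext u
    have h : ∀ v, f (σU (τU u) - τU (σU u)) v = 0 := by
      intro v
      have : f (σU (τU u)) v = f (τU (σU u)) v := by
        rw [(hσ (τU u) v).1, (hτ u v).1, (hτ (σU u) v).1, (hσ u v).1]
        exact key u v
      rw [map_sub, LinearMap.sub_apply, this, sub_self]
    have := hleft _ h
    simpa [sub_eq_zero] using this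
  have hV : σV ∘ₗ τV = τV ∘ₗ σV := by
    ext v
    have h : ∀ u, f u (σV (τV v) - τV (σV v)) = 0 := by
      intro u
      have h1 : f u (σV (τV v)) = σW (τW (f u v)) := by
        rw [← (hσ u (τV v)).2, ← (hσ u (τV v)).1, (hσ u (τV v)).1, ← (hτ u v).2]
      have h2 : f u (τV (σV v)) = τW (σW (f u v)) := by
        rw [← (hτ u (σV v)).2, ← (hτ u (σV v)).1, (hτ u (σV v)).1, ← (hσ u v).2]
      rw [map_sub, h1, h2, key u v, sub_self]
    have := hright _ h
    simpa [sub_eq_zero] using this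
  exact ⟨hU, hV, hW⟩
end

section
/- Let G be a finite nilpotent group of class 2. Then G has a hyperbolic pair (normal abelian subgroups M, N with G = MN and M ∩ N ≤ Z(G)) if and only if the adjoint ring A(∘_G) of the commutation bimap ∘_G : G/Z(G) × G/Z(G) → [G,G] contains an idempotent e with e* = 1 − e, where * is the natural involution of A(∘_G). -/
/-!
As `[G, G] ≤ Z(G)`, the quotient `V = G/Z(G)` is abelian and `∘_G` is bimultiplicative and
nondegenerate. Abelian subgroups of `G` map to totally isotropic subgroups of `V`, so a hyperbolic
pair gives `V = M̄ ⊕ N̄` with `M̄, N̄` totally isotropic (`M̄ ∩ N̄` lies in the radical). The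
projection `e` onto `M̄` along `N̄` satisfies `∘(e p, q) = ∘(e p, (1 - e) q) = ∘(p, (1 - e) q)`,
i.e. `e* = 1 - e`. Conversely, for a hyperbolic idempotent `e`, `ker e` and `im e` are totally
isotropic complements, and their preimages in `G` form a hyperbolic pair.
-/

open scoped commutatorElement

namespace Subgroup

theorem exists_projection_of_isCompl {G : Type*} [Group G] {H K : Subgroup G} [K.Normal]
    (h : IsCompl H K) :
    ∃ e : G →* G, (∀ g, e g ∈ H) ∧ (∀ g, g * (e g)⁻¹ ∈ K) ∧ ∀ a ∈ H, e a = a := by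
  have hc : H.IsComplement' K := isComplement'_of_disjoint_and_mul_eq_univ h.disjoint
    (by rw [← mul_normal, h.sup_eq_top, coe_top])
  let e : G →* G := H.subtype.comp (hc.QuotientMulEquiv.toMonoidHom.comp (QuotientGroup.mk' K))
  have he_mem : ∀ g, e g ∈ H := fun g => Subtype.property _
  have he_inv_mul : ∀ g, (e g)⁻¹ * g ∈ K := hc.inv_toLeftFun_mul_mem
  refine ⟨e, he_mem, fun g => Normal.mem_comm inferInstance (he_inv_mul g), fun a ha => ?_⟩
  have : (e a)⁻¹ * a ∈ H ⊓ K := mem_inf.mpr ⟨mul_mem (inv_mem (he_mem a)) ha, he_inv_mul a⟩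
  rwa [h.inf_eq_bot, mem_bot, inv_mul_eq_one] at this

end Subgroup

namespace MonoidHom

theorem isCompl_ker_range_of_idempotent {G : Type*} [Group G] (e : G →* G)
    (he : ∀ g, e (e g) = e g) : IsCompl e.ker e.range := by
  refine ⟨disjoint_iff_inf_le.mpr ?_, codisjoint_iff_le_sup.mpr fun g _ => ?_⟩
  · rintro _ ⟨hker, g, rfl⟩
    rw [Subgroup.mem_bot, ← he, hker]
  · have hker : g * (e g)⁻¹ ∈ e.ker := by rw [mem_ker, map_mul, map_inv, he, mul_inv_cancel]
    simpa using Subgroup.mul_mem_sup hker (mem_range.mpr ⟨g, rfl⟩ : e g ∈ e.range)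

end MonoidHom

open Subgroup hiding commutator
open QuotientGroup

section Commutator

variable {G : Type*} [Group G]

theorem commutatorElement_mul_mem_center_left {z : G} (hz : z ∈ center G) (a b : G) :
    ⁅a * z, b⁆ = ⁅a, b⁆ := by
  rw [commutatorElement_mul_left_eq_conj_mul,
    commutatorElement_eq_one_iff_mul_comm.mpr (mem_center_iff.mp hz b).symm, mul_one,
    mul_inv_cancel, one_mul]

theorem commutatorElement_mul_mem_center_right {z : G} (hz : z ∈ center G) (a b : G) :
    ⁅a, b * z⁆ = ⁅a, b⁆ := by
  rw [commutatorElement_mul_right_eq_mul_conj,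
    commutatorElement_eq_one_iff_mul_comm.mpr (mem_center_iff.mp hz a), mul_one,
    mul_inv_cancel_right]

theorem commutatorElement_congr_center {a a' b b' : G} (ha : (a : G ⧸ center G) = a')
    (hb : (b : G ⧸ center G) = b') : ⁅a, b⁆ = ⁅a', b'⁆ := by
  rw [QuotientGroup.eq] at ha hb
  rw [← mul_inv_cancel_left a a', ← mul_inv_cancel_left b b',
    commutatorElement_mul_mem_center_left ha, commutatorElement_mul_mem_center_right hb]

theorem commutatorElement_mem_center (hG : commutator G ≤ center G) (a b : G) :
    ⁅a, b⁆ ∈ center G :=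
  hG (commutator_mem_commutator (mem_top a) (mem_top b))

theorem commutatorElement_mul_left_of_commutator_le_center (hG : commutator G ≤ center G)
    (a b c : G) :
    ⁅a * b, c⁆ = ⁅a, c⁆ * ⁅b, c⁆ := by
  have hbc := mem_center_iff.mp (commutatorElement_mem_center hG b c)
  rw [commutatorElement_mul_left_eq_conj_mul, hbc a, mul_inv_cancel_right]
  exact (hbc _).symm

theorem commutatorElement_mul_right_of_commutator_le_center (hG : commutator G ≤ center G)
    (a b c : G) :
    ⁅a, b * c⁆ = ⁅a, b⁆ * ⁅a, c⁆ := by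
  have hac := mem_center_iff.mp (commutatorElement_mem_center hG a c)
  rw [commutatorElement_mul_right_eq_mul_conj, mul_assoc _ b, hac b, ← mul_assoc,
    mul_inv_cancel_right]

end Commutator

section CommutationBimap

variable {G : Type*} [Group G]

/-- The commutation bimap `∘_G`, evaluated on representatives. -/
noncomputable def commutationBimap (p q : G ⧸ center G) : G := ⁅p.out, q.out⁆

@[simp]
theorem commutationBimap_mk (x y : G) :
    commutationBimap (x : G ⧸ center G) (y : G ⧸ center G) = ⁅x, y⁆ :=
  commutatorElement_congr_center (out_eq' _) (out_eq' _)

theorem commutationBimap_mul_left (hG : commutator G ≤ center G) (p q r : G ⧸ center G) :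
    commutationBimap (p * q) r = commutationBimap p r * commutationBimap q r := by
  induction p using QuotientGroup.induction_on
  induction q using QuotientGroup.induction_on
  induction r using QuotientGroup.induction_on
  simp only [← mk_mul, commutationBimap_mk,
    commutatorElement_mul_left_of_commutator_le_center hG]

theorem commutationBimap_mul_right (hG : commutator G ≤ center G) (p q r : G ⧸ center G) :
    commutationBimap p (q * r) = commutationBimap p q * commutationBimap p r := by
  induction p using QuotientGroup.induction_on
  induction q using QuotientGroup.induction_on
  induction r using QuotientGroup.induction_on
  simp only [← mk_mul, commutationBimap_mk,
    commutatorElement_mul_right_of_commutator_le_center hG]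

@[simp]
theorem commutationBimap_one_left (q : G ⧸ center G) : commutationBimap 1 q = 1 := by
  induction q using QuotientGroup.induction_on
  rw [← mk_one, commutationBimap_mk, commutatorElement_one_left]

@[simp]
theorem commutationBimap_one_right (p : G ⧸ center G) : commutationBimap p 1 = 1 := by
  induction p using QuotientGroup.induction_on
  rw [← mk_one, commutationBimap_mk, commutatorElement_one_right]

theorem eq_one_of_forall_commutationBimap_eq_one {p : G ⧸ center G}
    (hp : ∀ q, commutationBimap p q = 1) : p = 1 := by
  induction p using QuotientGroup.induction_on with | H x
  refine (eq_one_iff x).mpr (mem_center_iff.mpr fun g => ?_)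
  rw [eq_comm, ← commutatorElement_eq_one_iff_mul_comm, ← commutationBimap_mk, hp]

end CommutationBimap

section Hyperbolic

variable {G : Type*} [Group G]

def Subgroup.IsTotallyIsotropic (H : Subgroup (G ⧸ center G)) : Prop :=
  ∀ p ∈ H, ∀ q ∈ H, commutationBimap p q = 1

/-- `e* = 1 - e` in the adjoint ring of `∘_G`, with `(1 - e) q` written multiplicatively as
`q * (e q)⁻¹`. -/
def IsHyperbolic (e : G ⧸ center G →* G ⧸ center G) : Prop :=
  ∀ p q, commutationBimap (e p) q = commutationBimap p (q * (e q)⁻¹)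

theorem isHyperbolic_iff_forall_commutatorElement (e : G ⧸ center G →* G ⧸ center G) :
    IsHyperbolic e ↔ ∀ x y x' y' : G, (x' : G ⧸ center G) = e x →
      (y' : G ⧸ center G) = (y : G ⧸ center G) * (e y)⁻¹ → ⁅x', y⁆ = ⁅x, y'⁆ := by
  refine ⟨fun he x y x' y' hx hy => ?_, fun h p q => ?_⟩
  · rw [← commutationBimap_mk, hx, he, ← hy, commutationBimap_mk]
  · exact h p.out q.out (e p).out (q * (e q)⁻¹).out (by simp only [out_eq'])
      (by simp only [out_eq'])

theorem isTotallyIsotropic_map_mk {M : Subgroup G} (hM : ∀ a ∈ M, ∀ b ∈ M, a * b = b * a) :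
    (M.map (mk' (center G))).IsTotallyIsotropic := by
  rintro _ ⟨a, ha, rfl⟩ _ ⟨b, hb, rfl⟩
  exact (commutationBimap_mk a b).trans (commutatorElement_eq_one_iff_mul_comm.mpr (hM a ha b hb))

theorem Subgroup.IsTotallyIsotropic.mul_comm_of_mem_comap {H : Subgroup (G ⧸ center G)}
    (hH : H.IsTotallyIsotropic) :
    ∀ a ∈ H.comap (mk' (center G)), ∀ b ∈ H.comap (mk' (center G)), a * b = b * a :=
  fun a ha b hb => commutatorElement_eq_one_iff_mul_comm.mp
    ((commutationBimap_mk a b).symm.trans (hH _ ha _ hb))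

/-- `H ⊓ K` lies in the radical of `∘_G`, which is trivial. -/
theorem disjoint_of_isTotallyIsotropic (hG : commutator G ≤ center G)
    {H K : Subgroup (G ⧸ center G)} [K.Normal] (hH : H.IsTotallyIsotropic)
    (hK : K.IsTotallyIsotropic) (hHK : H ⊔ K = ⊤) : Disjoint H K := by
  refine disjoint_iff_inf_le.mpr fun q hq => eq_one_of_forall_commutationBimap_eq_one fun r => ?_
  obtain ⟨h, hh, k, hk, rfl⟩ := mem_sup_of_normal_right.mp (hHK ▸ mem_top r)
  rw [commutationBimap_mul_right hG, hH q (mem_inf.mp hq).1 h hh, hK q (mem_inf.mp hq).2 k hk,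
    one_mul]

theorem isHyperbolic_of_isTotallyIsotropic (hG : commutator G ≤ center G)
    {H K : Subgroup (G ⧸ center G)} (hH : H.IsTotallyIsotropic) (hK : K.IsTotallyIsotropic)
    {e : G ⧸ center G →* G ⧸ center G} (he_mem : ∀ q, e q ∈ H)
    (he_compl : ∀ q, q * (e q)⁻¹ ∈ K) : IsHyperbolic e := by
  intro p q
  calc commutationBimap (e p) q = commutationBimap (e p) (q * (e q)⁻¹ * e q) := by
        rw [inv_mul_cancel_right]
    _ = commutationBimap (e p) (q * (e q)⁻¹) := by
        rw [commutationBimap_mul_right hG, hH _ (he_mem p) _ (he_mem q), mul_one]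
    _ = commutationBimap (p * (e p)⁻¹ * e p) (q * (e q)⁻¹) := by
        rw [commutationBimap_mul_left hG, hK _ (he_compl p) _ (he_compl q), one_mul]
    _ = commutationBimap p (q * (e q)⁻¹) := by rw [inv_mul_cancel_right]

theorem IsHyperbolic.isTotallyIsotropic_ker {e : G ⧸ center G →* G ⧸ center G}
    (he : IsHyperbolic e) : e.ker.IsTotallyIsotropic := by
  intro p hp q hq
  rw [MonoidHom.mem_ker] at hp hq
  rw [← mul_one q, ← inv_one, ← hq, ← he, hp, commutationBimap_one_left]

theorem IsHyperbolic.isTotallyIsotropic_range {e : G ⧸ center G →* G ⧸ center G}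
    (he : IsHyperbolic e) (he_idem : ∀ q, e (e q) = e q) : e.range.IsTotallyIsotropic := by
  rintro _ ⟨p, rfl⟩ _ ⟨q, rfl⟩
  rw [← he_idem p, he, he_idem, mul_inv_cancel, commutationBimap_one_right]

end Hyperbolic

theorem hyperbolic_pair_iff_hyperbolic_idempotent_general
    (G : Type*) [Group G] (hG : commutator G ≤ Subgroup.center G) :
    (∃ M N : Subgroup G, M.Normal ∧ N.Normal ∧
        (∀ a ∈ M, ∀ b ∈ M, a * b = b * a) ∧
        (∀ a ∈ N, ∀ b ∈ N, a * b = b * a) ∧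
        M ⊔ N = ⊤ ∧ M ⊓ N ≤ Subgroup.center G) ↔
    (∃ e : (G ⧸ Subgroup.center G) →* (G ⧸ Subgroup.center G),
        (∀ q, e (e q) = e q) ∧
        (∀ x y x' y' : G,
          (QuotientGroup.mk x' : G ⧸ Subgroup.center G) = e (QuotientGroup.mk x) →
          (QuotientGroup.mk y' : G ⧸ Subgroup.center G) =
            (QuotientGroup.mk y : G ⧸ Subgroup.center G) * (e (QuotientGroup.mk y))⁻¹ →
          ⁅x', y⁆ = ⁅x, y'⁆)) := by
  -- makes every subgroup of `G ⧸ center G` normal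
  have := Normal.quotient_commutative_iff_commutator_le.mpr hG
  simp only [← isHyperbolic_iff_forall_commutatorElement]
  constructor
  · rintro ⟨M, N, -, -, hM, hN, hMN, -⟩
    have hMN' : M.map (mk' (center G)) ⊔ N.map (mk' (center G)) = ⊤ := by
      rw [← Subgroup.map_sup, hMN, map_top_of_surjective _ (mk'_surjective _)]
    have hM' := isTotallyIsotropic_map_mk hM
    have hN' := isTotallyIsotropic_map_mk hN
    obtain ⟨e, he_mem, he_compl, he_fix⟩ := exists_projection_of_isCompl
      ⟨disjoint_of_isTotallyIsotropic hG hM' hN' hMN', codisjoint_iff.mpr hMN'⟩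
    exact ⟨e, fun q => he_fix _ (he_mem q),
      isHyperbolic_of_isTotallyIsotropic hG hM' hN' he_mem he_compl⟩
  · rintro ⟨e, he_idem, he⟩
    have hc := e.isCompl_ker_range_of_idempotent he_idem
    refine ⟨e.ker.comap (mk' (center G)), e.range.comap (mk' (center G)), inferInstance,
      inferInstance, he.isTotallyIsotropic_ker.mul_comm_of_mem_comap,
      (he.isTotallyIsotropic_range he_idem).mul_comm_of_mem_comap, ?_, ?_⟩
    · rw [comap_sup_eq _ _ _ (mk'_surjective _), hc.sup_eq_top, comap_top]
    · rw [← comap_inf, hc.inf_eq_bot, MonoidHom.comap_bot, ker_mk']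

/-- A finite nilpotent group `G` of class 2 has a hyperbolic pair (normal abelian
subgroups `M, N` with `G = MN` and `M ∩ N ≤ Z(G)`) if and only if the adjoint ring of the
commutation bimap `∘_G : G/Z(G) × G/Z(G) → [G,G]` contains a hyperbolic idempotent, i.e. an
idempotent endomorphism `e` of `G/Z(G)` with `e* = 1 - e`: for all `x, y` (and representatives
`x'` of `e(xZ)` and `y'` of `(yZ)·(e(yZ))⁻¹`) one has `⁅x', y⁆ = ⁅x, y'⁆`. -/
theorem hyperbolic_pair_iff_hyperbolic_idempotent
    (G : Type*) [Group G] [Finite G] (hG : commutator G ≤ Subgroup.center G) :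
    (∃ M N : Subgroup G, M.Normal ∧ N.Normal ∧
        (∀ a ∈ M, ∀ b ∈ M, a * b = b * a) ∧
        (∀ a ∈ N, ∀ b ∈ N, a * b = b * a) ∧
        M ⊔ N = ⊤ ∧ M ⊓ N ≤ Subgroup.center G) ↔
    (∃ e : (G ⧸ Subgroup.center G) →* (G ⧸ Subgroup.center G),
        (∀ q, e (e q) = e q) ∧
        (∀ x y x' y' : G,
          (QuotientGroup.mk x' : G ⧸ Subgroup.center G) = e (QuotientGroup.mk x) →
          (QuotientGroup.mk y' : G ⧸ Subgroup.center G) =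
            (QuotientGroup.mk y : G ⧸ Subgroup.center G) * (e (QuotientGroup.mk y))⁻¹ →
          ⁅x', y⁆ = ⁅x, y'⁆)) :=
  hyperbolic_pair_iff_hyperbolic_idempotent_general G hG
end

section
/- Let k be a field, and let Φ₁, Φ₂ be alternating bilinear forms on a finite-dimensional k-vector space V. If there exist matrices Ψ₁, Ψ₂ (of size n × m) and a basis of V = k^n ⊕ k^m relative to which Φᵢ has block matrix [[0, Ψᵢ],[−Ψᵢᵀ, 0]] for i = 1,2 with Ψ₁ invertible (so n = m), then the adjoint ring A({Φ₁,Φ₂}) = {(L,R) : LΦᵢ = ΦᵢRᵀ for i=1,2} restricted to the diagonal action equals the centralizer of the slope σ = Φ₂Φ₁⁻¹ in the full matrix algebra: A = C_{M_{2n}(k)}(σ), and the center of A equals k[σ] ≅ k[x]/(m(x)) where m(x) is the minimal polynomial of σ. -/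
/-!
Since `Φ₁` is invertible, `L Φ₁ = Φ₁ R` forces `R = Φ₁⁻¹ L Φ₁`, and then `L Φ₂ = Φ₂ R` says exactly
that `L` commutes with `σ = Φ₂ Φ₁⁻¹`.

For the center of this centralizer, view `k^{2n}` as a `k[X]`-module through `σ`. It is a finite
direct sum of cyclic modules `k[X]/(pᵢ^{eᵢ})` with `pᵢ` irreducible. An `L` commuting with every
module endomorphism sends each generator `eᵢ` to `gᵢ eᵢ`, and the maps between summands force
`gᵢ ≡ gⱼ (mod pⱼ^{eⱼ})` whenever `pⱼ^{eⱼ} ∣ pᵢ^{eᵢ}`. Any two moduli either divide one another or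
are coprime, so a Chinese remainder argument produces a single `f` with `L = f(σ)`. Finally
`k[σ] ≅ k[X]/ker(aeval σ) = k[X]/(m)`.
-/

open Matrix
open scoped Polynomial

section ChineseRemainder

variable {R : Type*} [CommRing R] {ι : Type*}

theorem exists_dvd_sub_of_dvd_or_isCoprime (μ g : ι → R)
    (hμ : ∀ i j, μ i ∣ μ j ∨ μ j ∣ μ i ∨ IsCoprime (μ i) (μ j))
    (hg : ∀ i j, μ i ∣ μ j → μ i ∣ g j - g i) (s : Finset ι) :
    ∃ f, ∀ i ∈ s, μ i ∣ f - g i := by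
  classical
  induction s using Finset.strongInduction with
  | _ s ih =>
  rcases s.eq_empty_or_nonempty with rfl | hs
  · exact ⟨0, by simp⟩
  obtain ⟨a, has, hmax⟩ := s.exists_maximalFor (fun i => Associates.mk (μ i)) hs
  set t := s.filter fun i => ¬ μ i ∣ μ a
  obtain ⟨h, hh⟩ := ih t (Finset.filter_ssubset.mpr ⟨a, has, not_not.mpr dvd_rfl⟩)
  have hcop : IsCoprime (μ a) (∏ i ∈ t, μ i) := IsCoprime.prod_right fun i hi => by
    obtain ⟨his, hia⟩ := Finset.mem_filter.mp hi
    have hai : ¬ μ a ∣ μ i := fun hai =>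
      hia (Associates.mk_le_mk_iff_dvd.mp (hmax his (Associates.mk_le_mk_iff_dvd.mpr hai)))
    exact ((hμ a i).resolve_left hai).resolve_left hia
  obtain ⟨u, v, huv⟩ := hcop
  refine ⟨g a * (v * ∏ i ∈ t, μ i) + h * (u * μ a), fun i hi => ?_⟩
  by_cases hia : μ i ∣ μ a
  · have ha : μ a ∣ g a * (v * ∏ i ∈ t, μ i) + h * (u * μ a) - g a :=
      ⟨(h - g a) * u, by linear_combination g a * huv⟩
    simpa using dvd_add (hia.trans ha) (hg i a hia)
  · have hit : i ∈ t := Finset.mem_filter.mpr ⟨hi, hia⟩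
    have ht : ∏ i ∈ t, μ i ∣ g a * (v * ∏ i ∈ t, μ i) + h * (u * μ a) - h :=
      ⟨(g a - h) * v, by linear_combination h * huv⟩
    simpa using dvd_add ((Finset.dvd_prod_of_mem μ hit).trans ht) (hh i hit)

theorem Irreducible.pow_dvd_or_dvd_or_isCoprime [IsDomain R] [IsPrincipalIdealRing R] {p q : R}
    (hp : Irreducible p) (hq : Irreducible q) (a b : ℕ) :
    p ^ a ∣ q ^ b ∨ q ^ b ∣ p ^ a ∨ IsCoprime (p ^ a) (q ^ b) := by
  by_cases hpq : p ∣ q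
  · have hassoc := hp.associated_of_dvd hq hpq
    rcases le_total a b with hab | hab
    · exact .inl ((pow_dvd_pow p hab).trans hassoc.pow_pow.dvd)
    · exact .inr (.inl ((pow_dvd_pow q hab).trans hassoc.symm.pow_pow.dvd))
  · exact .inr (.inr (hp.coprime_iff_not_dvd.mpr hpq).pow)

end ChineseRemainder

section CentralEndomorphisms

variable {R : Type*} [CommRing R]

theorem exists_eq_smul_of_forall_commute_pi {ι : Type*} [Fintype ι] [DecidableEq ι] (μ : ι → R)
    (hμ : ∀ i j, μ i ∣ μ j ∨ μ j ∣ μ i ∨ IsCoprime (μ i) (μ j))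
    (L : Module.End R (Π i, R ⧸ R ∙ μ i)) (hL : ∀ T, Commute L T) :
    ∃ f : R, ∀ x, L x = f • x := by
  let Q i := R ⧸ R ∙ μ i
  let e i : Π j, Q j := Pi.single i (Submodule.Quotient.mk 1)
  have hle {i j} (h : μ j ∣ μ i) : R ∙ μ i ≤ R ∙ μ j :=
    Ideal.span_singleton_le_span_singleton.mpr h
  let move i j (h : μ j ∣ μ i) : Module.End R (Π i, Q i) :=
    LinearMap.single R Q j ∘ₗ Submodule.factor (hle h) ∘ₗ LinearMap.proj i
  have move_apply : ∀ i j h x, move i j h x = Pi.single j (Submodule.factor (hle h) (x i)) :=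
    fun _ _ _ _ => rfl
  have hLe : ∀ i j (h : μ j ∣ μ i), L (e j) = move i j h (L (e i)) := fun i j h => by
    have he : move i j h (e i) = e j := by simp [move_apply, e]
    rw [← he]
    exact LinearMap.congr_fun (hL (move i j h)) (e i)
  choose g hg using fun i => Submodule.Quotient.mk_surjective _ (L (e i) i)
  have hLg : ∀ i, L (e i) = Pi.single i (Submodule.Quotient.mk (g i)) := fun i => by
    rw [hLe i i dvd_rfl, move_apply i i dvd_rfl, ← hg i]
    rfl
  have hcompat : ∀ i j, μ i ∣ μ j → μ i ∣ g j - g i := fun i j h => by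
    have := congrFun ((hLg i).symm.trans ((hLe j i h).trans (by rw [hLg j, move_apply j i h]))) i
    simp only [Pi.single_eq_same] at this
    exact Ideal.mem_span_singleton.mp ((Submodule.Quotient.eq _).mp this.symm)
  obtain ⟨f, hf⟩ := exists_dvd_sub_of_dvd_or_isCoprime μ g hμ hcompat Finset.univ
  refine ⟨f, fun x => LinearMap.congr_fun (?_ : L = f • LinearMap.id) x⟩
  refine LinearMap.pi_ext' fun i => Submodule.linearMap_qext _ (LinearMap.ext_ring ?_)
  simp only [LinearMap.comp_apply, Submodule.mkQ_apply, LinearMap.coe_single]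
  rw [hLg, LinearMap.smul_apply, LinearMap.id_apply, ← Pi.single_smul,
    ← Submodule.Quotient.mk_smul, smul_eq_mul, mul_one]
  congr 1
  exact (Submodule.Quotient.eq _).mpr
    (Ideal.mem_span_singleton.mpr (dvd_sub_comm.mp (hf i (Finset.mem_univ i))))

theorem Module.End.exists_eq_smul_of_forall_commute [IsDomain R] [IsPrincipalIdealRing R]
    {M : Type*} [AddCommGroup M] [Module R M] [Module.Finite R M] (hM : Module.IsTorsion R M)
    (L : Module.End R M) (hL : ∀ T, Commute L T) : ∃ f : R, ∀ x, L x = f • x := by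
  classical
  obtain ⟨ι, _, p, hp, e, ⟨ψ⟩⟩ := Module.equiv_directSum_of_isTorsion hM
  let ψ' := ψ.trans (DirectSum.linearEquivFunOnFintype R ι _)
  let φ := ψ'.conjRingEquiv
  obtain ⟨f, hf⟩ := exists_eq_smul_of_forall_commute_pi (fun i => p i ^ e i)
    (fun i j => (hp i).pow_dvd_or_dvd_or_isCoprime (hp j) _ _) (φ L)
    (fun T => by simpa using (hL (φ.symm T)).map φ)
  refine ⟨f, fun x => ψ'.injective ?_⟩
  simpa [φ] using hf (ψ' x)

end CentralEndomorphisms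

namespace Module.End

variable {K V : Type*} [Field K] [AddCommGroup V] [Module K V]

noncomputable def toAEval' (φ T : Module.End K V) (hT : Commute φ T) :
    Module.End K[X] (AEval' φ) :=
  LinearMap.ofAEval φ ((AEval'.of φ).toLinearMap ∘ₗ T) fun m => by
    simp [AEval'.X_smul_of, ← Module.End.mul_apply, hT.eq]

@[simp]
theorem toAEval'_apply (φ T : Module.End K V) (hT : Commute φ T) (w : AEval' φ) :
    toAEval' φ T hT w = AEval'.of φ (T ((AEval'.of φ).symm w)) :=
  rfl

theorem exists_eq_aeval_of_forall_commute [FiniteDimensional K V] (φ L : Module.End K V)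
    (hL : ∀ T, Commute φ T → Commute L T) : ∃ f : K[X], L = Polynomial.aeval φ f := by
  let of := AEval'.of φ
  have hcomm (S : Module.End K[X] (AEval' φ)) :
      Commute (toAEval' φ L (hL φ (.refl φ)).symm) S := by
    let S₀ : Module.End K V := of.symm.toLinearMap ∘ₗ S.restrictScalars K ∘ₗ of.toLinearMap
    have hS₀ : Commute φ S₀ := by
      ext m
      simp [S₀, of, ← AEval'.X_smul_of]
    ext w
    simpa [S₀] using congrArg of (LinearMap.congr_fun (hL S₀ hS₀).eq (of.symm w))
  obtain ⟨f, hf⟩ := exists_eq_smul_of_forall_commute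
    (Module.AEval.isTorsion_of_finiteDimensional K V φ) _ hcomm
  refine ⟨f, LinearMap.ext fun m => ?_⟩
  simpa [of] using congrArg of.symm (hf (of m))

end Module.End

namespace Matrix

variable {m α : Type*} [Fintype m] [DecidableEq m]

theorem centralizer_centralizer_singleton {K : Type*} [Field K] (σ : Matrix m m K) :
    Subalgebra.centralizer K (Subalgebra.centralizer K {σ} : Set (Matrix m m K)) =
      Algebra.adjoin K {σ} := by
  refine le_antisymm (fun L hL => ?_) (Algebra.adjoin_le_centralizer_centralizer K {σ})
  let e : Matrix m m K ≃ₐ[K] Module.End K (m → K) := toLinAlgEquiv'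
  obtain ⟨f, hf⟩ := Module.End.exists_eq_aeval_of_forall_commute (e σ) (e L) fun T hT => by
    have hT' : e.symm T ∈ Subalgebra.centralizer K {σ} := by
      simpa [Subalgebra.mem_centralizer_iff] using (hT.map e.symm).eq
    simpa using ((show Commute (e.symm T) L from hL _ hT').map e).symm
  rw [Algebra.adjoin_singleton_eq_range_aeval]
  exact ⟨f, e.injective (by rw [hf]; exact (Polynomial.aeval_algHom_apply e.toAlgHom σ f).symm)⟩

variable [CommRing α]

theorem isUnit_fromBlocks_zero_zero {B C : Matrix m m α} (hB : IsUnit B) (hC : IsUnit C) :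
    IsUnit (fromBlocks 0 B C 0) := by
  refine (isUnit_iff_isUnit_det _).mpr
    (isUnit_det_of_right_inverse (B := fromBlocks 0 C⁻¹ B⁻¹ 0) ?_)
  rw [fromBlocks_multiply]
  simp [mul_nonsing_inv _ ((isUnit_iff_isUnit_det _).mp hB),
    mul_nonsing_inv _ ((isUnit_iff_isUnit_det _).mp hC)]

theorem exists_mul_eq_mul_and_mul_eq_mul_iff {Φ₁ Φ₂ : Matrix m m α} (hΦ₁ : IsUnit Φ₁)
    (L : Matrix m m α) :
    (∃ R, L * Φ₁ = Φ₁ * R ∧ L * Φ₂ = Φ₂ * R) ↔ L * (Φ₂ * Φ₁⁻¹) = Φ₂ * Φ₁⁻¹ * L := by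
  have h := (isUnit_iff_isUnit_det _).mp hΦ₁
  constructor
  · rintro ⟨R, h₁, h₂⟩
    have hR : R = Φ₁⁻¹ * L * Φ₁ := by rw [Matrix.mul_assoc, h₁, nonsing_inv_mul_cancel_left _ _ h]
    calc L * (Φ₂ * Φ₁⁻¹) = Φ₂ * (Φ₁⁻¹ * L * Φ₁) * Φ₁⁻¹ := by rw [← Matrix.mul_assoc, h₂, hR]
      _ = Φ₂ * Φ₁⁻¹ * L := by simp only [Matrix.mul_assoc, mul_nonsing_inv _ h, Matrix.mul_one]
  · intro hL
    refine ⟨Φ₁⁻¹ * L * Φ₁, by rw [Matrix.mul_assoc, mul_nonsing_inv_cancel_left _ _ h], ?_⟩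
    calc L * Φ₂ = L * (Φ₂ * Φ₁⁻¹) * Φ₁ := by
          rw [Matrix.mul_assoc L, nonsing_inv_mul_cancel_right _ _ h]
      _ = Φ₂ * (Φ₁⁻¹ * L * Φ₁) := by rw [hL]; simp only [Matrix.mul_assoc]

end Matrix

noncomputable def Algebra.adjoinSingletonAlgEquivAdjoinRoot {K A : Type*} [Field K] [Ring A]
    [Algebra K A] (x : A) : Algebra.adjoin K {x} ≃ₐ[K] AdjoinRoot (minpoly K x) :=
  (Subalgebra.equivOfEq _ _ (Algebra.adjoin_singleton_eq_range_aeval K x)).trans <|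
    (Ideal.quotientKerEquivRange (Polynomial.aeval x)).symm.trans <|
      Ideal.quotientEquivAlgOfEq K (minpoly.ker_aeval_eq_span_minpoly K x)

theorem adjoint_ring_of_sloped_pair_eq_centralizer_of_slope_general
    (k : Type*) [Field k] (n : ℕ)
    (Ψ₁ : Matrix (Fin n) (Fin n) k) (hΨ₁ : IsUnit Ψ₁)
    (Φ₁ Φ₂ σ : Matrix (Fin n ⊕ Fin n) (Fin n ⊕ Fin n) k)
    (hΦ₁ : Φ₁ = Matrix.fromBlocks 0 Ψ₁ (-Ψ₁ᵀ) 0)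
    (hσ : σ = Φ₂ * Φ₁⁻¹) :
    ({L : Matrix (Fin n ⊕ Fin n) (Fin n ⊕ Fin n) k |
        ∃ R, L * Φ₁ = Φ₁ * Rᵀ ∧ L * Φ₂ = Φ₂ * Rᵀ}
      = {L | L * σ = σ * L}) ∧
    ({L : Matrix (Fin n ⊕ Fin n) (Fin n ⊕ Fin n) k |
        L * σ = σ * L ∧ ∀ Y, Y * σ = σ * Y → L * Y = Y * L}
      = (Algebra.adjoin k {σ} : Subalgebra k (Matrix (Fin n ⊕ Fin n) (Fin n ⊕ Fin n) k))) ∧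
    Nonempty ((Algebra.adjoin k {σ} : Subalgebra k (Matrix (Fin n ⊕ Fin n) (Fin n ⊕ Fin n) k))
        ≃ₐ[k] AdjoinRoot (minpoly k σ)) := by
  have hΦ₁u : IsUnit Φ₁ :=
    hΦ₁ ▸ isUnit_fromBlocks_zero_zero hΨ₁ (Ψ₁.isUnit_transpose.mpr hΨ₁).neg
  refine ⟨?_, ?_, ⟨Algebra.adjoinSingletonAlgEquivAdjoinRoot σ⟩⟩
  · ext L
    rw [Set.mem_ofPred_eq, Set.mem_ofPred_eq, hσ, ← exists_mul_eq_mul_and_mul_eq_mul_iff hΦ₁u]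
    exact ⟨fun ⟨R, h⟩ => ⟨Rᵀ, h⟩, fun ⟨R, h⟩ => ⟨Rᵀ, by rwa [transpose_transpose]⟩⟩
  · rw [← centralizer_centralizer_singleton]
    ext L
    simp only [Set.mem_ofPred_eq, SetLike.mem_coe, Subalgebra.mem_centralizer_iff,
      Set.mem_singleton_iff, forall_eq]
    exact ⟨fun ⟨_, h⟩ Y hY => (h Y hY.symm).symm,
      fun h => ⟨(h σ rfl).symm, fun Y hY => (h Y hY.symm).symm⟩⟩

/-- For a sloped pair of alternating forms
`Φᵢ = [[0, Ψᵢ],[−Ψᵢᵀ, 0]]` with `Ψ₁` invertible, the adjoint ring (first components of pairs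
`(L, R)` with `L Φᵢ = Φᵢ Rᵀ`, `i = 1,2`) equals the centralizer of the slope
`σ = Φ₂ Φ₁⁻¹` in the full matrix algebra, and its center equals `k[σ] ≅ k[x]/(m(x))`
with `m` the minimal polynomial of `σ`. -/
theorem adjoint_ring_of_sloped_pair_eq_centralizer_of_slope
    (k : Type*) [Field k] (n : ℕ)
    (Ψ₁ Ψ₂ : Matrix (Fin n) (Fin n) k) (hΨ₁ : IsUnit Ψ₁)
    (Φ₁ Φ₂ σ : Matrix (Fin n ⊕ Fin n) (Fin n ⊕ Fin n) k)
    (hΦ₁ : Φ₁ = Matrix.fromBlocks 0 Ψ₁ (-Ψ₁ᵀ) 0)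
    (hΦ₂ : Φ₂ = Matrix.fromBlocks 0 Ψ₂ (-Ψ₂ᵀ) 0)
    (hσ : σ = Φ₂ * Φ₁⁻¹) :
    ({L : Matrix (Fin n ⊕ Fin n) (Fin n ⊕ Fin n) k |
        ∃ R, L * Φ₁ = Φ₁ * Rᵀ ∧ L * Φ₂ = Φ₂ * Rᵀ}
      = {L | L * σ = σ * L}) ∧
    ({L : Matrix (Fin n ⊕ Fin n) (Fin n ⊕ Fin n) k |
        L * σ = σ * L ∧ ∀ Y, Y * σ = σ * Y → L * Y = Y * L}
      = (Algebra.adjoin k {σ} : Subalgebra k (Matrix (Fin n ⊕ Fin n) (Fin n ⊕ Fin n) k))) ∧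
    Nonempty ((Algebra.adjoin k {σ} : Subalgebra k (Matrix (Fin n ⊕ Fin n) (Fin n ⊕ Fin n) k))
        ≃ₐ[k] AdjoinRoot (minpoly k σ)) :=
  adjoint_ring_of_sloped_pair_eq_centralizer_of_slope_general k n Ψ₁ hΨ₁ Φ₁ Φ₂ σ hΦ₁ hσ
end

section
/- For every finite field F_q, there exists d and a pair {Φ₁, Φ₂} of alternating d × d matrices over F_q such that every F_q-linear combination aΦ₁ + bΦ₂ is degenerate (singular), yet the pair decomposes as an orthogonal direct sum of 2×2 blocks each of which is individually sloped (admits an invertible linear combination). Explicitly, taking for each ω ∈ F_q the 2×2 block pair ([[0,1],[−1,0]], [[0,ω],[−ω,0]]) and forming the orthogonal sum over all ω ∈ F_q gives such a pair with d = 2q. -/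
open Matrix MvPolynomial

/-- over any finite field `F = F_q` there is a pair of alternating matrices
(explicitly, the orthogonal sum over all `ω ∈ F` of the `2×2` pairs
`([[0,1],[−1,0]], [[0,ω],[−ω,0]])`, of total size `d = 2q`) all of whose `2×2` blocks are
individually sloped, while every linear combination `aΦ₁ + bΦ₂` with `b ≠ 0` is singular;
indeed the discriminant is `∏_{ω∈F} (x + ωy)²`, so `∏_{ω∈F}(x − ωy)` divides the Pfaffian. -/
theorem flat_configuration_over_finite_field
    (F : Type*) [Field F] [Fintype F] [DecidableEq F]
    (A : Matrix (Fin 2) (Fin 2) F) (hA : A = !![0, 1; -1, 0])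
    (Φ₁ Φ₂ : Matrix (Fin 2 × F) (Fin 2 × F) F)
    (hΦ₁ : Φ₁ = Matrix.blockDiagonal (fun _ : F => A))
    (hΦ₂ : Φ₂ = Matrix.blockDiagonal (fun ω : F => ω • A)) :
    (Φ₁ᵀ = -Φ₁ ∧ Φ₂ᵀ = -Φ₂ ∧ (∀ i, Φ₁ i i = 0) ∧ (∀ i, Φ₂ i i = 0)) ∧
    (∀ ω : F, ∃ a b : F, IsUnit (a • A + b • (ω • A))) ∧
    (∀ a b : F, b ≠ 0 → ¬ IsUnit (a • Φ₁ + b • Φ₂)) ∧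
    (Matrix.det
        ((X 0 : MvPolynomial (Fin 2) F) • (Φ₁.map (C : F → MvPolynomial (Fin 2) F))
          + (X 1 : MvPolynomial (Fin 2) F) • (Φ₂.map (C : F → MvPolynomial (Fin 2) F)))
      = ∏ ω : F, ((X 0 : MvPolynomial (Fin 2) F) + C ω * X 1) ^ 2) := by
  have hAT : Aᵀ = -A := by
    subst hA; ext i j; fin_cases i <;> fin_cases j <;> simp
  have hdetA : A.det = 1 := by subst hA; simp [Matrix.det_fin_two_of]
  have hAd : ∀ i, A i i = 0 := by subst hA; intro i; fin_cases i <;> simp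
  refine ⟨⟨?_, ?_, ?_, ?_⟩, ?_, ?_, ?_⟩
  · subst hΦ₁
    rw [Matrix.blockDiagonal_transpose]
    ext ⟨i, ω⟩ ⟨j, ω'⟩
    by_cases h : ω = ω' <;>
      simp [Matrix.blockDiagonal_apply, h, hAT]
  · subst hΦ₂
    rw [Matrix.blockDiagonal_transpose]
    ext ⟨i, ω⟩ ⟨j, ω'⟩
    by_cases h : ω = ω' <;>
      simp [Matrix.blockDiagonal_apply, h, Matrix.transpose_smul, hAT]
  · rintro ⟨i, ω⟩
    simp [hΦ₁, Matrix.blockDiagonal_apply, hAd]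
  · rintro ⟨i, ω⟩
    simp [hΦ₂, Matrix.blockDiagonal_apply, hAd]
  · intro ω
    refine ⟨1, 0, ?_⟩
    simp only [one_smul, zero_smul, add_zero]
    rw [Matrix.isUnit_iff_isUnit_det, hdetA]
    exact isUnit_one
  · intro a b hb h
    have key : a • Φ₁ + b • Φ₂ =
        Matrix.blockDiagonal (fun ω : F => (a + b * ω) • A) := by
      subst hΦ₁ hΦ₂
      ext ⟨i, ω⟩ ⟨j, ω'⟩
      by_cases hω : ω = ω'
      · subst hω
        simp only [Matrix.add_apply, Matrix.smul_apply, Matrix.blockDiagonal_apply_eq,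
          smul_eq_mul]
        ring
      · simp [Matrix.blockDiagonal_apply_ne _ _ _ hω]
    rw [Matrix.isUnit_iff_isUnit_det, key, Matrix.det_blockDiagonal] at h
    have h0 : (∏ ω : F, ((a + b * ω) • A).det) = 0 := by
      refine Finset.prod_eq_zero (Finset.mem_univ (-a / b)) ?_
      have : a + b * (-a / b) = 0 := by field_simp; ring
      simp [this]
    rw [h0] at h
    exact h.ne_zero rfl
  · have key : ((X 0 : MvPolynomial (Fin 2) F) • (Φ₁.map (C : F → MvPolynomial (Fin 2) F))
          + (X 1 : MvPolynomial (Fin 2) F) • (Φ₂.map (C : F → MvPolynomial (Fin 2) F)))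
        = Matrix.blockDiagonal
            (fun ω : F => ((X 0 : MvPolynomial (Fin 2) F) + C ω * X 1) •
              (A.map (C : F → MvPolynomial (Fin 2) F))) := by
      subst hΦ₁ hΦ₂
      ext ⟨i, ω⟩ ⟨j, ω'⟩
      by_cases hω : ω = ω'
      · subst hω
        simp only [Matrix.add_apply, Matrix.smul_apply, Matrix.map_apply,
          Matrix.blockDiagonal_apply_eq, smul_eq_mul, Matrix.smul_apply]
        rw [C_mul]
        ring
      · simp [Matrix.blockDiagonal_apply_ne _ _ _ hω]
    rw [key, Matrix.det_blockDiagonal]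
    have hdm : (A.map (C : F → MvPolynomial (Fin 2) F)).det = 1 := by
      rw [← RingHom.mapMatrix_apply, ← RingHom.map_det, hdetA, C_1]
    refine Finset.prod_congr rfl fun ω _ => ?_
    rw [Matrix.det_smul, hdm, mul_one, Fintype.card_fin]
end

section
/- If ∘ : F_q^d × F_q^d → F_q² is a nondegenerate alternating bilinear map over the finite field F_q, all of whose orthogonally indecomposable summands are sloped, but ∘ itself is not sloped (no F_q-linear combination of the representing pair of forms is invertible), then q < d. -/
open Matrix Polynomial

set_option linter.unusedSectionVars false

section Aux

variable {R : Type*} [CommRing R] {ι : Type*} [Fintype ι] [DecidableEq ι]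

lemma entry_natDegree (A B : Matrix ι ι R) (i j : ι) :
    natDegree ((A.map C + (X : R[X]) • B.map C) i j) ≤ 1 := by
  simp only [Matrix.add_apply, Matrix.smul_apply, Matrix.map_apply, smul_eq_mul]
  refine (natDegree_add_le _ _).trans (max_le ?_ ?_)
  · simp
  · exact natDegree_mul_le.trans (by rw [natDegree_C, add_zero]; exact natDegree_X_le)

lemma detPoly_eval (A B : Matrix ι ι R) (a : R) :
    ((A.map C + (X : R[X]) • B.map C).det).eval a = (A + a • B).det := by
  rw [show ((A.map C + (X : R[X]) • B.map C).det).eval a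
      = (evalRingHom a) (A.map C + (X : R[X]) • B.map C).det from rfl,
    RingHom.map_det]
  congr 1
  ext i j
  simp only [RingHom.mapMatrix_apply, Matrix.map_apply, Matrix.map_map, Matrix.add_apply, Matrix.smul_apply, smul_eq_mul,
    coe_evalRingHom, eval_add, eval_mul, eval_C, eval_X]

lemma detPoly_coeff_card (A B : Matrix ι ι R) :
    ((A.map C + (X : R[X]) • B.map C).det).coeff (Fintype.card ι) = B.det := by
  rw [det_apply, Polynomial.finset_sum_coeff, det_apply]
  refine Finset.sum_congr rfl fun σ _ => ?_
  rw [Polynomial.coeff_smul]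
  congr 1
  have := coeff_prod_of_natDegree_le (s := (Finset.univ : Finset ι))
    (fun i => (A.map C + (X : R[X]) • B.map C) (σ i) i) 1
    (fun p _ => entry_natDegree A B _ _)
  rw [Finset.card_univ, mul_one] at this
  rw [this]
  refine Finset.prod_congr rfl fun i _ => ?_
  simp [Matrix.map_apply, coeff_C]

lemma detPoly_coeff_gt (A B : Matrix ι ι R) {k : ℕ} (hk : Fintype.card ι < k) :
    ((A.map C + (X : R[X]) • B.map C).det).coeff k = 0 := by
  rw [det_apply, Polynomial.finset_sum_coeff]
  refine Finset.sum_eq_zero fun σ _ => ?_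
  rw [Polynomial.coeff_smul, Polynomial.coeff_eq_zero_of_natDegree_lt, smul_zero]
  refine lt_of_le_of_lt ?_ hk
  refine (Polynomial.natDegree_prod_le _ _).trans ?_
  calc ∑ i : ι, natDegree ((A.map C + (X : R[X]) • B.map C) (σ i) i)
      ≤ ∑ _i : ι, 1 := Finset.sum_le_sum fun i _ => entry_natDegree A B _ _
    _ = Fintype.card ι := by simp

lemma det_blockDiagonal'' {t : ℕ} {m : Fin t → ℕ}
    (M : ∀ j : Fin t, Matrix (Fin (m j)) (Fin (m j)) R) :
    (blockDiagonal' M).det = ∏ j, (M j).det := by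
  rw [(blockTriangular_blockDiagonal' M).det_fintype]
  refine Finset.prod_congr rfl fun j _ => ?_
  have key : (blockDiagonal' M).toSquareBlock Sigma.fst j
      = (M j).submatrix
        (fun a : { a : Σ i : Fin t, Fin (m i) // a.1 = j } => Fin.cast (congrArg m a.2) a.1.2)
        (fun a => Fin.cast (congrArg m a.2) a.1.2) := by
    ext ⟨⟨i, x⟩, hi⟩ ⟨⟨i', y⟩, hi'⟩
    dsimp only at hi hi'
    subst hi; subst hi'
    simp [Matrix.toSquareBlock_def, blockDiagonal'_apply]
  rw [key]
  exact det_submatrix_equiv_self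
    (⟨fun a => Fin.cast (congrArg m a.2) a.1.2, fun i => ⟨⟨j, i⟩, rfl⟩,
      by rintro ⟨⟨i, x⟩, rfl⟩; rfl, fun i => rfl⟩ :
      { a : Σ i : Fin t, Fin (m i) // a.1 = j } ≃ Fin (m j)) (M j)

end Aux
open Polynomial

/-- if a nondegenerate alternating pair of forms over `F_q` decomposes
orthogonally into sloped blocks, yet no `F_q`-linear combination of the pair is invertible
(the pair is not globally sloped), then `q < d`, where `d` is the total dimension. -/
theorem not_sloped_with_sloped_blocks_implies_small_field
    (F : Type*) [Field F] [Fintype F] (t : ℕ) (m : Fin t → ℕ)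
    (B₁ B₂ : ∀ j : Fin t, Matrix (Fin (m j)) (Fin (m j)) F)
    (halt₁ : ∀ j, (B₁ j)ᵀ = -(B₁ j)) (halt₂ : ∀ j, (B₂ j)ᵀ = -(B₂ j))
    (hdiag₁ : ∀ j, ∀ i, B₁ j i i = 0) (hdiag₂ : ∀ j, ∀ i, B₂ j i i = 0)
    (hsloped : ∀ j, ∃ a b : F, IsUnit (a • B₁ j + b • B₂ j))
    (hnotglobal : ∀ a b : F,
      ¬ IsUnit (a • Matrix.blockDiagonal' (fun j => B₁ j)
        + b • Matrix.blockDiagonal' (fun j => B₂ j))) :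
    Fintype.card F < ∑ j : Fin t, m j := by
  classical
  set d := ∑ j : Fin t, m j with hd
  set Φ₁ := Matrix.blockDiagonal' (fun j => B₁ j) with hΦ₁
  set Φ₂ := Matrix.blockDiagonal' (fun j => B₂ j) with hΦ₂
  have hcard : Fintype.card ((j : Fin t) × Fin (m j)) = d := by
    simp [Fintype.card_sigma, hd]
  have hd0 : d ≠ 0 := by
    intro h0
    have : IsEmpty ((j : Fin t) × Fin (m j)) :=
      Fintype.card_eq_zero_iff.mp (by rw [hcard, h0])
    exact hnotglobal 0 0 (by
      rw [Matrix.isUnit_iff_isUnit_det, Matrix.det_isEmpty]; exact isUnit_one)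
  set P : Polynomial F := (Φ₁.map C + (X : (Polynomial F)) • Φ₂.map C).det with hP
  have hdet0 : ∀ a b : F, (a • Φ₁ + b • Φ₂).det = 0 := by
    intro a b
    by_contra h
    exact hnotglobal a b ((Matrix.isUnit_iff_isUnit_det _).mpr (isUnit_iff_ne_zero.mpr h))
  have hblock : Φ₁.map C + (X : Polynomial F) • Φ₂.map C
      = blockDiagonal' (fun j => (B₁ j).map C + (X : Polynomial F) • (B₂ j).map C) := by
    have h1 : Φ₁.map C = blockDiagonal' fun j => (B₁ j).map C :=
      blockDiagonal'_map _ _ (map_zero C)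
    have h2 : Φ₂.map C = blockDiagonal' fun j => (B₂ j).map C :=
      blockDiagonal'_map _ _ (map_zero C)
    rw [h1, h2, ← blockDiagonal'_smul, ← blockDiagonal'_add]
    rfl
  have hPprod : P = ∏ j, ((B₁ j).map C + (X : Polynomial F) • (B₂ j).map C).det := by
    rw [hP, hblock, det_blockDiagonal'']
  have hPne : P ≠ 0 := by
    rw [hPprod]
    refine Finset.prod_ne_zero_iff.mpr fun j _ => ?_
    obtain ⟨a, b, hu⟩ := hsloped j
    have hdet : (a • B₁ j + b • B₂ j).det ≠ 0 :=
      ((Matrix.isUnit_iff_isUnit_det _).mp hu).ne_zero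
    by_cases ha : a = 0
    · subst ha
      have hb : (B₂ j).det ≠ 0 := by
        intro h
        rw [zero_smul, zero_add, det_smul, h, mul_zero] at hdet
        exact hdet rfl
      intro h
      have hc := detPoly_coeff_card (B₁ j) (B₂ j)
      rw [h, coeff_zero] at hc
      exact hb hc.symm
    · intro h
      have heval := detPoly_eval (B₁ j) (B₂ j) (a⁻¹ * b)
      rw [h, eval_zero] at heval
      have hrw : B₁ j + (a⁻¹ * b) • B₂ j = a⁻¹ • (a • B₁ j + b • B₂ j) := by
        rw [smul_add, smul_smul, smul_smul, inv_mul_cancel₀ ha, one_smul]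
      rw [hrw, det_smul] at heval
      rcases mul_eq_zero.mp heval.symm with h' | h'
      · exact pow_ne_zero _ (inv_ne_zero ha) h'
      · exact hdet h'
  have hcoeff : ∀ N, d - 1 < N → P.coeff N = 0 := by
    intro N hN
    rcases lt_or_ge d N with h | h
    · exact detPoly_coeff_gt _ _ (by rw [hcard]; exact h)
    · have hNd : N = d := by omega
      subst hNd
      rw [hP, ← hcard, detPoly_coeff_card]
      have h2 := hdet0 0 1
      rwa [zero_smul, one_smul, zero_add] at h2
  have hdeg : P.natDegree ≤ d - 1 := natDegree_le_iff_coeff_eq_zero.mpr hcoeff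
  have hroots : (Finset.univ : Finset F).val ≤ P.roots := by
    rw [Multiset.le_iff_subset Finset.univ.nodup]
    intro a _
    rw [Polynomial.mem_roots hPne]
    have he := detPoly_eval Φ₁ Φ₂ a
    have h2 := hdet0 1 a
    rw [one_smul] at h2
    rw [Polynomial.IsRoot, hP, he, h2]
  have hle : Fintype.card F ≤ P.natDegree := by
    calc Fintype.card F = Multiset.card (Finset.univ : Finset F).val := rfl
      _ ≤ Multiset.card P.roots := Multiset.card_le_card hroots
      _ ≤ P.natDegree := P.card_roots'
  omega
end

section
/- Let p be a prime and let {Φ₁, Φ₂} and {Λ₁, Λ₂} be pairs of alternating forms over a field k, and suppose (α, α̂) ∈ GL(V) × GL₂(k) is a pseudo-isometry from the bimap represented by {Φ₁,Φ₂} to the one represented by {Λ₁,Λ₂}, i.e., α Φᵢ αᵀ = Σⱼ (α̂)ᵢⱼ Λⱼ for i = 1,2 (the transformed pair equals the α̂-linear combination of the Λ's). Then the Pfaffians satisfy Pf(Φ₁,Φ₂)^{α̂} ≡ Pf(Λ₁,Λ₂) modulo multiplication by a nonzero scalar of k, where f^{α̂}(x,y) = f(ax+by, cx+dy) for α̂ =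 [[a,b],[c,d]]. -/
open Matrix MvPolynomial

private lemma pf_aux_swap_sq (R : Type*) [CommRing R] (n : ℕ) :
    (fromBlocks (0 : Matrix (Fin n) (Fin n) R) (1 : Matrix (Fin n) (Fin n) R) 1 0).det *
    (fromBlocks (0 : Matrix (Fin n) (Fin n) R) (1 : Matrix (Fin n) (Fin n) R) 1 0).det = 1 := by
  rw [← det_mul, fromBlocks_multiply]
  simp

private lemma pf_aux_blockdet {R : Type*} [CommRing R] {n : ℕ} (A : Matrix (Fin n) (Fin n) R) :
    (fromBlocks 0 A (-Aᵀ) 0).det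
      = (fromBlocks (0 : Matrix (Fin n) (Fin n) R) (1 : Matrix (Fin n) (Fin n) R) 1 0).det
        * ((-1) ^ n * A.det ^ 2) := by
  have h : fromBlocks (0 : Matrix (Fin n) (Fin n) R) A (-Aᵀ) 0
      = fromBlocks 0 (1 : Matrix (Fin n) (Fin n) R) 1 0 * fromBlocks (-Aᵀ) 0 0 A := by
    rw [fromBlocks_multiply]; simp
  rw [h, det_mul, det_fromBlocks_zero₁₂, det_neg, det_transpose, Fintype.card_fin]
  ring

private lemma pf_aux_comb1 {k R : Type*} [CommRing k] [CommRing R] {n : ℕ} (f : k →+* R)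
    (s t : R) (Ψa Ψb : Matrix (Fin n) (Fin n) k) :
    s • (fromBlocks 0 Ψa (-Ψaᵀ) 0).map f + t • (fromBlocks 0 Ψb (-Ψbᵀ) 0).map f
      = fromBlocks 0 (s • Ψa.map f + t • Ψb.map f)
          (-(s • Ψa.map f + t • Ψb.map f)ᵀ) 0 := by
  ext i j
  rcases i with i | i <;> rcases j with j | j <;>
    simp [Matrix.map_apply] <;> ring

private lemma pf_aux_comb2 {k R : Type*} [CommRing k] [CommRing R] {n : ℕ} (f : k →+* R)
    (s t : R) (a b c d : k) (Θa Θb : Matrix (Fin n) (Fin n) k) :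
    s • ((a • fromBlocks 0 Θa (-Θaᵀ) 0 + b • fromBlocks 0 Θb (-Θbᵀ) 0).map f)
      + t • ((c • fromBlocks 0 Θa (-Θaᵀ) 0 + d • fromBlocks 0 Θb (-Θbᵀ) 0).map f)
      = fromBlocks 0 ((f a * s + f c * t) • Θa.map f + (f b * s + f d * t) • Θb.map f)
          (-((f a * s + f c * t) • Θa.map f + (f b * s + f d * t) • Θb.map f)ᵀ) 0 := by
  ext i j
  rcases i with i | i <;> rcases j with j | j <;>
    simp [Matrix.map_apply, mul_add, add_mul] <;> ring

/-- a pseudo-isometry `(α, α̂)` between sloped pairs of alternating forms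
`{Φ₁,Φ₂}` (with corner blocks `Ψᵢ`) and `{Λ₁,Λ₂}` (with corner blocks `Θᵢ`), i.e.
`α Φᵢ αᵀ = Σⱼ α̂ᵢⱼ Λⱼ`, carries the Pfaffian `Pf(Φ₁,Φ₂) = det(xΨ₁+yΨ₂)` to
`Pf(Λ₁,Λ₂) = det(xΘ₁+yΘ₂)` up to a nonzero scalar of `k`, via the substitution action of
`α̂` on binary forms. -/
theorem pfaffian_pseudo_isometry_invariant
    (k : Type*) [Field k] (n : ℕ)
    (Ψ₁ Ψ₂ Θ₁ Θ₂ : Matrix (Fin n) (Fin n) k)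
    (Φ₁ Φ₂ Λ₁ Λ₂ : Matrix (Fin n ⊕ Fin n) (Fin n ⊕ Fin n) k)
    (hΦ₁ : Φ₁ = Matrix.fromBlocks 0 Ψ₁ (-Ψ₁ᵀ) 0)
    (hΦ₂ : Φ₂ = Matrix.fromBlocks 0 Ψ₂ (-Ψ₂ᵀ) 0)
    (hΛ₁ : Λ₁ = Matrix.fromBlocks 0 Θ₁ (-Θ₁ᵀ) 0)
    (hΛ₂ : Λ₂ = Matrix.fromBlocks 0 Θ₂ (-Θ₂ᵀ) 0)
    (α : Matrix (Fin n ⊕ Fin n) (Fin n ⊕ Fin n) k) (hα : IsUnit α.det)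
    (g : Matrix (Fin 2) (Fin 2) k) (hg : IsUnit g.det)
    (hpi₁ : α * Φ₁ * αᵀ = g 0 0 • Λ₁ + g 0 1 • Λ₂)
    (hpi₂ : α * Φ₂ * αᵀ = g 1 0 • Λ₁ + g 1 1 • Λ₂) :
    ∃ u : k, u ≠ 0 ∧
      MvPolynomial.aeval
          (fun i : Fin 2 => ∑ j : Fin 2, (C (g j i) : MvPolynomial (Fin 2) k) * X j)
          (Matrix.det
            ((X 0 : MvPolynomial (Fin 2) k) • (Θ₁.map (C : k → MvPolynomial (Fin 2) k))
              + (X 1 : MvPolynomial (Fin 2) k) • (Θ₂.map (C : k → MvPolynomial (Fin 2) k))))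
        = (C u : MvPolynomial (Fin 2) k) *
          Matrix.det
            ((X 0 : MvPolynomial (Fin 2) k) • (Ψ₁.map (C : k → MvPolynomial (Fin 2) k))
              + (X 1 : MvPolynomial (Fin 2) k) • (Ψ₂.map (C : k → MvPolynomial (Fin 2) k))) := by
  classical
  subst hΦ₁ hΦ₂ hΛ₁ hΛ₂
  set R := MvPolynomial (Fin 2) k with hRdef
  set P : Matrix (Fin n) (Fin n) R :=
    (X 0 : R) • (Ψ₁.map (C : k → R)) + (X 1 : R) • (Ψ₂.map (C : k → R)) with hPdef
  set N : Matrix (Fin n) (Fin n) R :=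
    ((C (g 0 0) : R) * X 0 + (C (g 1 0) : R) * X 1) • (Θ₁.map (C : k → R))
      + ((C (g 0 1) : R) * X 0 + (C (g 1 1) : R) * X 1) • (Θ₂.map (C : k → R)) with hNdef
  set w : R := (fromBlocks (0 : Matrix (Fin n) (Fin n) R) (1 : Matrix (Fin n) (Fin n) R) 1 0).det
    with hwdef
  -- key matrix identity
  have hM : (X 0 : R) • ((fromBlocks 0 Ψ₁ (-Ψ₁ᵀ) 0).map (C : k → R))
        + (X 1 : R) • ((fromBlocks 0 Ψ₂ (-Ψ₂ᵀ) 0).map (C : k → R))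
      = fromBlocks 0 P (-Pᵀ) 0 :=
    pf_aux_comb1 (C : k →+* R) _ _ _ _
  have key : (α.map (C : k → R)) * (fromBlocks 0 P (-Pᵀ) 0) * (α.map (C : k → R))ᵀ
      = fromBlocks 0 N (-Nᵀ) 0 := by
    rw [← hM]
    calc (α.map (C : k → R)) *
          ((X 0 : R) • ((fromBlocks 0 Ψ₁ (-Ψ₁ᵀ) 0).map (C : k → R))
            + (X 1 : R) • ((fromBlocks 0 Ψ₂ (-Ψ₂ᵀ) 0).map (C : k → R)))
          * (α.map (C : k → R))ᵀ
        = (X 0 : R) • ((α * fromBlocks 0 Ψ₁ (-Ψ₁ᵀ) 0 * αᵀ).map (C : k → R))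
            + (X 1 : R) • ((α * fromBlocks 0 Ψ₂ (-Ψ₂ᵀ) 0 * αᵀ).map (C : k → R)) := by
          simp only [Matrix.map_mul, Matrix.transpose_map, mul_add, add_mul,
            mul_smul_comm, smul_mul_assoc]
      _ = (X 0 : R) •
              ((g 0 0 • fromBlocks 0 Θ₁ (-Θ₁ᵀ) 0 + g 0 1 • fromBlocks 0 Θ₂ (-Θ₂ᵀ) 0).map
                (C : k → R))
            + (X 1 : R) •
              ((g 1 0 • fromBlocks 0 Θ₁ (-Θ₁ᵀ) 0 + g 1 1 • fromBlocks 0 Θ₂ (-Θ₂ᵀ) 0).map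
                (C : k → R)) := by rw [hpi₁, hpi₂]
      _ = fromBlocks 0 N (-Nᵀ) 0 :=
          pf_aux_comb2 (C : k →+* R) (X 0) (X 1) (g 0 0) (g 0 1) (g 1 0) (g 1 1) Θ₁ Θ₂
  -- determinant of key
  have hdc : (α.map (C : k → R)).det = (C α.det : R) := by
    rw [RingHom.map_det, RingHom.mapMatrix_apply]
  have E : (C α.det : R) * (fromBlocks 0 P (-Pᵀ) 0).det * (C α.det : R)
      = (fromBlocks 0 N (-Nᵀ) 0).det := by
    have h := congrArg Matrix.det key
    rwa [det_mul, det_mul, det_transpose, hdc] at h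
  rw [pf_aux_blockdet P, pf_aux_blockdet N, ← hwdef] at E
  -- from E : C d * (w * ((-1)^n * P.det^2)) * C d = w * ((-1)^n * N.det^2)
  have hww : w * w = 1 := pf_aux_swap_sq R n
  have hsgn : ((-1 : R) ^ n) * ((-1 : R) ^ n) = 1 := by
    rw [← pow_add]
    exact Even.neg_one_pow ⟨n, rfl⟩
  have hone : (w * (-1 : R) ^ n) * (w * (-1 : R) ^ n) = 1 := by
    linear_combination ((-1 : R) ^ n * (-1 : R) ^ n) * hww + hsgn
  have E2 : ((C α.det : R) * P.det) ^ 2 = N.det ^ 2 := by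
    linear_combination (w * (-1 : R) ^ n) * E
      - (((C α.det : R) * P.det) ^ 2 - N.det ^ 2) * hone
  have E3 : (N.det - (C α.det : R) * P.det) * (N.det + (C α.det : R) * P.det) = 0 := by
    linear_combination (-1 : R) * E2
  -- relate N.det to the substituted Pfaffian
  have hNdet :
      MvPolynomial.aeval (fun i : Fin 2 => ∑ j : Fin 2, (C (g j i) : R) * X j)
          (Matrix.det ((X 0 : R) • (Θ₁.map (C : k → R)) + (X 1 : R) • (Θ₂.map (C : k → R))))
        = N.det := by
    rw [AlgHom.map_det, AlgHom.mapMatrix_apply]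
    congr 1
    refine Matrix.ext fun i j => ?_
    have hac : (algebraMap k R) = (C : k →+* R) := rfl
    simp [hNdef, Matrix.map_apply, Fin.sum_univ_two, hac]
  rcases mul_eq_zero.mp E3 with h | h
  · refine ⟨α.det, hα.ne_zero, ?_⟩
    rw [hNdet, sub_eq_zero.mp h]
  · refine ⟨-α.det, neg_ne_zero.mpr hα.ne_zero, ?_⟩
    rw [hNdet, eq_neg_of_add_eq_zero_left h, map_neg]
    ring
end
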